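/- Let f = (f_b) and g = (g_b) be two families of regular plane polynomial automorphisms parametrized by the same curve V. Then for any two transcendental parameters b, b' ∈ V(ℂ) ∖ V(K̄), there is a bijection between the sets Per(f_b) ∩ Per(g_b) and Per(f_{b'}) ∩ Per(g_{b'}); in particular these two sets have the same cardinality. -/

import Mathlib

open MvPolynomial Filter

noncomputable section

/-- Polynomials in two variables over ℂ. -/
abbrev Poly2 : Type := MvPolynomial (Fin 2) ℂ

/-- The polynomial map `ℂ² → ℂ²` with components `P, Q`. -/
def evalPair (P Q : Poly2) (z : ℂ × ℂ) : ℂ × ℂ :=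
  (eval ![z.1, z.2] P, eval ![z.1, z.2] Q)

/-- The degree of the pair `(P, Q)`. -/
def degPair (P Q : Poly2) : ℕ := max P.totalDegree Q.totalDegree

/-- Evaluation at `(x,y)` of the degree-`d` homogeneous part of `F`. -/
def evalHom (d : ℕ) (F : Poly2) (x y : ℂ) : ℂ :=
  eval ![x, y] (homogeneousComponent d F)

/-- `(P,Q)` and `(P',Q')` define mutually inverse polynomial maps of `ℂ²`. -/
def IsInverseQuad (P Q P' Q' : Poly2) : Prop :=
  (∀ z, evalPair P' Q' (evalPair P Q z) = z) ∧
  (∀ z, evalPair P Q (evalPair P' Q' z) = z)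

/-- The polynomial automorphism with components `(P,Q)` and inverse `(P',Q')` is regular. -/
def IsRegularQuad (P Q P' Q' : Poly2) : Prop :=
  2 ≤ degPair P Q ∧ 2 ≤ degPair P' Q' ∧
  ∀ x y : ℂ, (x, y) ≠ ((0 : ℂ), (0 : ℂ)) →
    ¬(evalHom (degPair P Q) P x y = 0 ∧ evalHom (degPair P Q) Q x y = 0 ∧
      evalHom (degPair P' Q') P' x y = 0 ∧ evalHom (degPair P' Q') Q' x y = 0)

/-- The (constant) Jacobian determinant of the polynomial map `(P,Q)`. -/
def Jac2 (P Q : Poly2) : ℂ :=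
  eval ![0, 0] (pderiv 0 P * pderiv 1 Q - pderiv 1 P * pderiv 0 Q)

/-- The set of periodic points of the polynomial map `(P,Q)`. -/
def PerSet (P Q : Poly2) : Set (ℂ × ℂ) :=
  {z | ∃ n : ℕ, 1 ≤ n ∧ (evalPair P Q)^[n] z = z}

/-- `log⁺ t = max (log t) 0`. -/
def logPlus (t : ℝ) : ℝ := max (Real.log t) 0

/-- Composition `F(R, S)` of a polynomial with a pair of polynomials. -/
def pcomp (F R S : Poly2) : Poly2 := aeval ![R, S] F

/-- The pair of polynomials representing the `n`-th iterate of the map `(P,Q)`. -/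
def iterPair (P Q : Poly2) : ℕ → Poly2 × Poly2
  | 0 => (X 0, X 1)
  | n + 1 => (pcomp P (iterPair P Q n).1 (iterPair P Q n).2,
      pcomp Q (iterPair P Q n).1 (iterPair P Q n).2)

/-- The degree of the `n`-th iterate of `(P,Q)`. -/
def degIter (P Q : Poly2) (n : ℕ) : ℕ := degPair (iterPair P Q n).1 (iterPair P Q n).2

/-- The complex points `V(ℂ)` of the affine variety cut out by the ideal `I` over `K`. -/
def Vcx (K : IntermediateField ℚ ℂ) (m : ℕ) (I : Ideal (MvPolynomial (Fin m) K)) :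
    Set (Fin m → ℂ) :=
  {b | ∀ p ∈ I, eval b (MvPolynomial.map (algebraMap K ℂ) p) = 0}

/-- The `K̄`-points `V(K̄)`: points of `V(ℂ)` with all coordinates algebraic over `K`. -/
def VKbar (K : IntermediateField ℚ ℂ) (m : ℕ) (I : Ideal (MvPolynomial (Fin m) K)) :
    Set (Fin m → ℂ) :=
  {b | b ∈ Vcx K m I ∧ ∀ i, IsAlgebraic K (b i)}

/-- Specialization at the parameter `b` of a polynomial in `K[t₁,…,t_m][x,y]`. -/
def specpoly (K : IntermediateField ℚ ℂ) (m : ℕ) (b : Fin m → ℂ)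
    (F : MvPolynomial (Fin m ⊕ Fin 2) K) : Poly2 :=
  aeval (Sum.elim (fun i => MvPolynomial.C (b i)) MvPolynomial.X)
    (MvPolynomial.map (algebraMap K ℂ) F)

/-- A family of regular plane polynomial automorphisms parametrized by the curve `V`. -/
structure RegFamily (K : IntermediateField ℚ ℂ) (m : ℕ)
    (I : Ideal (MvPolynomial (Fin m) K)) where
  P : MvPolynomial (Fin m ⊕ Fin 2) K
  Q : MvPolynomial (Fin m ⊕ Fin 2) K
  P' : MvPolynomial (Fin m ⊕ Fin 2) K
  Q' : MvPolynomial (Fin m ⊕ Fin 2) K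
  isAuto : ∀ b ∈ Vcx K m I,
    IsInverseQuad (specpoly K m b P) (specpoly K m b Q)
      (specpoly K m b P') (specpoly K m b Q') ∧
    IsRegularQuad (specpoly K m b P) (specpoly K m b Q)
      (specpoly K m b P') (specpoly K m b Q')

/-- The map `f_b : ℂ² → ℂ²` at the parameter `b`. -/
def famMap {K : IntermediateField ℚ ℂ} {m : ℕ} {I : Ideal (MvPolynomial (Fin m) K)}
    (f : RegFamily K m I) (b : Fin m → ℂ) : ℂ × ℂ → ℂ × ℂ :=
  evalPair (specpoly K m b f.P) (specpoly K m b f.Q)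

/-- The set of periodic points of `f_b`. -/
def famPer {K : IntermediateField ℚ ℂ} {m : ℕ} {I : Ideal (MvPolynomial (Fin m) K)}
    (f : RegFamily K m I) (b : Fin m → ℂ) : Set (ℂ × ℂ) :=
  PerSet (specpoly K m b f.P) (specpoly K m b f.Q)

/-- The Jacobian of `f_b`. -/
def famJac {K : IntermediateField ℚ ℂ} {m : ℕ} {I : Ideal (MvPolynomial (Fin m) K)}
    (f : RegFamily K m I) (b : Fin m → ℂ) : ℂ :=
  Jac2 (specpoly K m b f.P) (specpoly K m b f.Q)

/-- Two families are dynamically independent if no iterates agree along the whole family. -/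
def DynIndependent {K : IntermediateField ℚ ℂ} {m : ℕ} {I : Ideal (MvPolynomial (Fin m) K)}
    (f g : RegFamily K m I) : Prop :=
  ¬ ∃ n k : ℕ, 1 ≤ n ∧ 1 ≤ k ∧ ∀ b ∈ Vcx K m I, (famMap f b)^[n] = (famMap g b)^[k]

/-! At a parameter `b ∈ V(ℂ)` with a coordinate transcendental over `K`, the kernel of
evaluation `K[t] → ℂ` at `b` is the prime `I` itself: a strictly larger prime would be maximal
since `dim V = 1`, and then all coordinates of `b` would be algebraic by the Nullstellensatz.
So `b` and `b'` give two embeddings of the countable domain `K[t]/I` into `ℂ`, and as `ℂ` is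
algebraically closed of uncountable transcendence degree, they differ by an automorphism `σ`
of `ℂ` fixing `K`. Applying `σ` coordinatewise conjugates `f_b` to `f_b'` and `g_b` to `g_b'`,
so it maps the common periodic points of one pair bijectively onto those of the other. -/

universe u

open Cardinal Function

namespace IsAlgClosed

-- `K` and `L` are algebraic closures of purely transcendental extensions of `R` on bases of
-- the same cardinality `#K = #L`.
theorem exists_ringEquiv_comp_eq {R K L : Type u} [Field R] [Field K] [Field L]
    [IsAlgClosed K] [IsAlgClosed L] (hR : #R ≤ ℵ₀) (hK : ℵ₀ < #K) (hKL : #K = #L)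
    (φ : R →+* K) (ψ : R →+* L) : ∃ e : K ≃+* L, (e : K →+* L).comp φ = ψ := by
  let := φ.toAlgebra
  let := ψ.toAlgebra
  obtain ⟨s, hs⟩ := exists_isTranscendenceBasis R K
  obtain ⟨t, ht⟩ := exists_isTranscendenceBasis R L
  have hst : #s = #t := by
    rw [← cardinal_eq_cardinal_transcendence_basis_of_aleph0_lt' _ hs hR hK,
      ← cardinal_eq_cardinal_transcendence_basis_of_aleph0_lt' _ ht hR (hKL ▸ hK), hKL]
  obtain ⟨e⟩ := Cardinal.eq.1 hst
  let e₀ : Algebra.adjoin R (Set.range ((↑) : s → K)) ≃ₐ[R]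
      Algebra.adjoin R (Set.range ((↑) : t → L)) :=
    hs.1.aevalEquiv.symm.trans ((MvPolynomial.renameEquiv R e).trans ht.1.aevalEquiv)
  have := isAlgClosure_of_transcendence_basis _ hs
  have := isAlgClosure_of_transcendence_basis _ ht
  refine ⟨IsAlgClosure.equivOfEquiv K L e₀.toRingEquiv, RingHom.ext fun r => ?_⟩
  change _ = algebraMap R L r
  rw [RingHom.comp_apply, ← RingHom.algebraMap_toAlgebra φ,
    IsScalarTower.algebraMap_apply R (Algebra.adjoin R (Set.range ((↑) : s → K))) K,
    RingHom.coe_coe, IsAlgClosure.equivOfEquiv_algebraMap, AlgEquiv.coe_ringEquiv,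
    AlgEquiv.commutes, ← IsScalarTower.algebraMap_apply]

theorem exists_ringEquiv_comp_eq_of_injective {A L : Type u} [CommRing A]
    [IsDomain A] [Field L] [IsAlgClosed L] (hA : #A ≤ ℵ₀) (hL : ℵ₀ < #L)
    {φ ψ : A →+* L} (hφ : Injective φ) (hψ : Injective ψ) :
    ∃ e : L ≃+* L, (e : L →+* L).comp φ = ψ := by
  obtain ⟨e, he⟩ := exists_ringEquiv_comp_eq (Cardinal.mk_fractionRing A ▸ hA) hL rfl
    (IsFractionRing.lift hφ) (IsFractionRing.lift hψ)
  refine ⟨e, RingHom.ext fun a => ?_⟩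
  simpa using congr($he (algebraMap A (FractionRing A) a))

end IsAlgClosed

theorem Ideal.isMaximal_of_lt_of_ringKrullDim_quotient_le_one {R : Type*} [CommRing R]
    {I J : Ideal R} [I.IsPrime] [hJ : J.IsPrime] (hdim : ringKrullDim (R ⧸ I) ≤ 1)
    (hIJ : I < J) : J.IsMaximal := by
  by_contra hJmax
  obtain ⟨M, hM, hJM⟩ := J.exists_le_maximal hJ.ne_top
  have := hM.isPrime
  have hJM : J < M := lt_of_le_of_ne hJM fun h => hJmax (h ▸ hM)
  let pt (P : Ideal R) [hP : P.IsPrime] (hIP : I ≤ P) : PrimeSpectrum.zeroLocus (R := R) I :=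
    ⟨⟨P, hP⟩, hIP⟩
  have hheight : 1 < Order.height (pt M (hIJ.le.trans hJM.le)) :=
    Order.one_lt_height_iff.2 ⟨pt J hIJ.le, pt I le_rfl, hIJ, hJM⟩
  have hle := (Order.height_le_krullDim (pt M (hIJ.le.trans hJM.le))).trans
    ((ringKrullDim_quotient I).symm.trans_le hdim)
  exact absurd hle (by exact_mod_cast hheight.not_ge)

namespace MvPolynomial

theorem isAlgebraic_of_isMaximal_ker_aeval {ι K L : Type*} [Finite ι] [Field K] [CommRing L]
    [Nontrivial L] [Algebra K L] (b : ι → L) [(RingHom.ker (aeval (R := K) b)).IsMaximal]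
    (i : ι) : IsAlgebraic K (b i) := by
  let A := MvPolynomial ι K ⧸ RingHom.ker (aeval (R := K) b)
  let : Field A := Ideal.Quotient.field _
  have : Module.Finite K A := finite_of_finite_type_of_isJacobsonRing K A
  have hX : IsIntegral K (Ideal.Quotient.mk _ (X i) : A) := Algebra.IsIntegral.isIntegral _
  simpa using (hX.map (Ideal.kerLiftAlg (aeval (R := K) b))).isAlgebraic

theorem ker_aeval_eq_of_not_isAlgebraic {ι K L : Type*} [Finite ι] [Field K] [CommRing L]
    [IsDomain L] [Algebra K L] {I : Ideal (MvPolynomial ι K)} [I.IsPrime]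
    (hdim : ringKrullDim (MvPolynomial ι K ⧸ I) ≤ 1) {b : ι → L}
    (hIb : I ≤ RingHom.ker (aeval (R := K) b)) {i : ι} (hi : ¬IsAlgebraic K (b i)) :
    RingHom.ker (aeval (R := K) b) = I := by
  refine (hIb.lt_or_eq.resolve_left fun hlt => hi ?_).symm
  have := RingHom.ker_isPrime (aeval (R := K) b)
  have := Ideal.isMaximal_of_lt_of_ringKrullDim_quotient_le_one hdim hlt
  exact isAlgebraic_of_isMaximal_ker_aeval b i

theorem exists_algEquiv_apply_eq_of_ker_aeval_eq {ι K L : Type u} [Countable ι] [Field K]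
    [Countable K] [Field L] [IsAlgClosed L] [Algebra K L] (hL : ℵ₀ < #L) {b b' : ι → L}
    (h : RingHom.ker (aeval (R := K) b) = RingHom.ker (aeval (R := K) b')) :
    ∃ e : L ≃ₐ[K] L, ∀ i, e (b i) = b' i := by
  have := RingHom.ker_isPrime (aeval (R := K) b)
  have hA : #(MvPolynomial ι K ⧸ RingHom.ker (aeval (R := K) b)) ≤ ℵ₀ :=
    (mk_le_of_surjective Ideal.Quotient.mk_surjective).trans <| cardinalMk_le_max.trans <|
      max_le (max_le mk_le_aleph0 mk_le_aleph0) le_rfl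
  have hφ := RingHom.lift_injective_of_ker_le_ideal _ (f := (aeval (R := K) b).toRingHom)
    (fun p hp => hp) le_rfl
  have hψ := RingHom.lift_injective_of_ker_le_ideal _ (f := (aeval (R := K) b').toRingHom)
    (fun p hp => (h ▸ hp : p ∈ RingHom.ker (aeval (R := K) b'))) h.ge
  obtain ⟨e, he⟩ := IsAlgClosed.exists_ringEquiv_comp_eq_of_injective hA hL hφ hψ
  have he' (p : MvPolynomial ι K) : e (aeval b p) = aeval b' p :=
    RingHom.congr_fun he (Ideal.Quotient.mk _ p)
  exact ⟨AlgEquiv.ofRingEquiv (f := e) fun k => by simpa using he' (C k),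
    fun i => by simpa using he' (X i)⟩

end MvPolynomial

open MvPolynomial

theorem Function.Semiconj.apply_mem_periodicPts_iff {α β : Type*} {fa : α → α} {fb : β → β}
    {e : α ≃ β} (h : Semiconj e fa fb) {x : α} : e x ∈ periodicPts fb ↔ x ∈ periodicPts fa :=
  ⟨fun hx => by simpa using (h.inverse_left e.left_inv e.right_inv).mapsTo_periodicPts hx,
    fun hx => h.mapsTo_periodicPts hx⟩

theorem perSet_eq_periodicPts (P Q : Poly2) : PerSet P Q = periodicPts (evalPair P Q) :=
  rfl

theorem semiconj_evalPair_map (σ : ℂ →+* ℂ) (P Q : Poly2) :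
    Semiconj (Prod.map σ σ) (evalPair P Q) (evalPair (map σ P) (map σ Q)) := by
  intro z
  have hσ : σ ∘ ![z.1, z.2] = ![σ z.1, σ z.2] := by ext i; fin_cases i <;> rfl
  simp [evalPair, map_eval, hσ]

theorem mem_Vcx_iff {K : IntermediateField ℚ ℂ} {m : ℕ} {I : Ideal (MvPolynomial (Fin m) K)}
    {b : Fin m → ℂ} : b ∈ Vcx K m I ↔ I ≤ RingHom.ker (aeval (R := K) b) := by
  simp [Vcx, SetLike.le_def, eval_map, aeval_def]

theorem ker_aeval_eq_of_mem_Vcx_of_not_mem_VKbar {K : IntermediateField ℚ ℂ} {m : ℕ}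
    {I : Ideal (MvPolynomial (Fin m) K)} [I.IsPrime]
    (hdim : ringKrullDim (MvPolynomial (Fin m) K ⧸ I) ≤ 1) {b : Fin m → ℂ}
    (hb : b ∈ Vcx K m I) (hbt : b ∉ VKbar K m I) : RingHom.ker (aeval (R := K) b) = I := by
  obtain ⟨i, hi⟩ : ∃ i, ¬IsAlgebraic K (b i) := by simpa [VKbar, hb] using hbt
  exact ker_aeval_eq_of_not_isAlgebraic hdim (mem_Vcx_iff.1 hb) hi

theorem specpoly_eq_map {K : IntermediateField ℚ ℂ} {m : ℕ} {b b' : Fin m → ℂ}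
    (e : ℂ ≃ₐ[K] ℂ) (he : ∀ i, e (b i) = b' i) (F : MvPolynomial (Fin m ⊕ Fin 2) K) :
    specpoly K m b' F = map (e : ℂ →+* ℂ) (specpoly K m b F) := by
  induction F using MvPolynomial.induction_on with
  | C k => simpa [specpoly, algebraMap_eq] using (e.commutes k).symm
  | add p q hp hq => simp only [specpoly, map_add] at hp hq ⊢; rw [hp, hq]
  | mul_X p i hp =>
    simp only [specpoly, map_mul] at hp ⊢
    rw [hp]
    cases i <;> simp [he]

/-- At any two transcendental parameters, the sets of common periodic points of the two
families are in bijection. -/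
theorem transcendental_fibers_equinumerous (K : IntermediateField ℚ ℂ)
    [FiniteDimensional ℚ K] (m : ℕ) (I : Ideal (MvPolynomial (Fin m) K))
    (hI : I.IsPrime) (hdim : ringKrullDim (MvPolynomial (Fin m) K ⧸ I) = 1)
    (f g : RegFamily K m I) (b b' : Fin m → ℂ)
    (hb : b ∈ Vcx K m I) (hbt : b ∉ VKbar K m I)
    (hb' : b' ∈ Vcx K m I) (hbt' : b' ∉ VKbar K m I) :
    Nonempty ((famPer f b ∩ famPer g b : Set (ℂ × ℂ)) ≃
      (famPer f b' ∩ famPer g b' : Set (ℂ × ℂ))) := by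
  have : Countable K := Finsupp.Countable.of_moduleFinite (R := ℚ)
  obtain ⟨e, he⟩ := exists_algEquiv_apply_eq_of_ker_aeval_eq
    (by rw [mk_complex]; exact aleph0_lt_continuum)
    ((ker_aeval_eq_of_mem_Vcx_of_not_mem_VKbar hdim.le hb hbt).trans
      (ker_aeval_eq_of_mem_Vcx_of_not_mem_VKbar hdim.le hb' hbt').symm)
  let E : ℂ × ℂ ≃ ℂ × ℂ := e.toEquiv.prodCongr e.toEquiv
  have hE (F G : MvPolynomial (Fin m ⊕ Fin 2) K) (z : ℂ × ℂ) :
      z ∈ PerSet (specpoly K m b F) (specpoly K m b G) ↔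
        E z ∈ PerSet (specpoly K m b' F) (specpoly K m b' G) := by
    rw [specpoly_eq_map e he F, specpoly_eq_map e he G, perSet_eq_periodicPts,
      perSet_eq_periodicPts]
    exact (semiconj_evalPair_map (e : ℂ →+* ℂ) _ _).apply_mem_periodicPts_iff.symm
  exact ⟨E.subtypeEquiv fun z => and_congr (hE f.P f.Q z) (hE g.P g.Q z)⟩
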